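/- Let n ≥ 2 be an integer and ν₁ = n − 1. If T is a real random variable distributed according to the Student t distribution with ν₁ degrees of freedom, then E[{n log(1 + T²/ν₁)}²] = n²{D(ν₁)² − 2D'(ν₁)}; consequently, writing m₁ = n D(ν₁) and m₂ = n²{D(ν₁)² − 2D'(ν₁)}, the variance of n log(1 + T²/ν₁) equals m₂ − m₁². -/

import Mathlib

open Real MeasureTheory

/-- `K ν = Γ((ν+1)/2) / (√(πν) Γ(ν/2))`. -/
noncomputable def Kfun (ν : ℝ) : ℝ :=
  Real.Gamma ((ν + 1) / 2) / (Real.sqrt (Real.pi * ν) * Real.Gamma (ν / 2))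

/-- Density of the Student t distribution with `ν` degrees of freedom. -/
noncomputable def tDensity (ν : ℝ) (t : ℝ) : ℝ :=
  Kfun ν * (1 + t ^ 2 / ν) ^ (-((ν + 1) / 2))

/-- The digamma function `Ψ(x) = d/dx log Γ(x)`. -/
noncomputable def digamma (x : ℝ) : ℝ :=
  deriv (fun y => Real.log (Real.Gamma y)) x

/-- `D(ν) = Ψ((ν+1)/2) − Ψ(ν/2)`. -/
noncomputable def Dfun (ν : ℝ) : ℝ :=
  digamma ((ν + 1) / 2) - digamma (ν / 2)

/-! The substitution `t = √ν y` turns the `k`-th moment of `log (1 + T²/ν)` into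
`M k s / M 0 s` at `s = (ν + 1)/2`, where `M k s = ∫ log (1 + y²)^k (1 + y²)^(-s) dy` is
`logMoment k s`, and differentiating under the integral sign gives `M k' = -M (k + 1)`.
The beta integral evaluates `M 0 s = √π Γ(s - 1/2) / Γ(s)`, so logarithmic differentiation
gives `D(2s - 1) = M 1 s / M 0 s`; differentiating this quotient once more gives
`D² - 2D' = M 2 / M 0`. -/

open Set Filter Topology

lemma log_pow_le_rpow {w δ : ℝ} (hw : 1 ≤ w) (hδ : 0 < δ) (k : ℕ) :
    Real.log w ^ k ≤ ((k + 1) / δ) ^ k * w ^ δ := by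
  set ε := δ / (k + 1) with hε_def
  have hε : 0 < ε := by positivity
  have hlog : Real.log w ≤ w ^ ε / ε := Real.log_le_rpow_div (by linarith) hε
  have hexp : ε * k ≤ δ := by
    rw [hε_def, div_mul_eq_mul_div, div_le_iff₀ (by positivity)]
    nlinarith
  calc Real.log w ^ k ≤ (w ^ ε / ε) ^ k := pow_le_pow_left₀ (Real.log_nonneg hw) hlog k
    _ = ((k + 1) / δ) ^ k * w ^ (ε * k) := by
        rw [div_pow, Real.rpow_mul (by linarith), Real.rpow_natCast, div_eq_mul_inv, mul_comm,
          ← inv_pow, hε_def, inv_div]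
    _ ≤ ((k + 1) / δ) ^ k * w ^ δ := by gcongr

lemma log_pow_mul_rpow_neg_le {w a x δ : ℝ} (hw : 1 ≤ w) (hδ : 0 < δ) (hx : a ≤ x) (k : ℕ) :
    Real.log w ^ k * w ^ (-x) ≤ ((k + 1) / δ) ^ k * w ^ (-(a - δ)) := by
  have hw0 : 0 < w := by linarith
  calc Real.log w ^ k * w ^ (-x) ≤ ((k + 1) / δ) ^ k * w ^ δ * w ^ (-a) :=
        mul_le_mul (log_pow_le_rpow hw hδ k)
          (Real.rpow_le_rpow_of_exponent_le hw (by linarith)) (by positivity) (by positivity)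
    _ = ((k + 1) / δ) ^ k * w ^ (-(a - δ)) := by
        rw [mul_assoc, ← Real.rpow_add hw0]
        ring_nf

noncomputable def logMoment (k : ℕ) (s : ℝ) : ℝ :=
  ∫ y : ℝ, Real.log (1 + y ^ 2) ^ k * (1 + y ^ 2) ^ (-s)

lemma one_le_one_add_sq (y : ℝ) : 1 ≤ 1 + y ^ 2 := le_add_of_nonneg_right (sq_nonneg y)

lemma integrable_one_add_sq_rpow_neg {s : ℝ} (hs : 1 / 2 < s) :
    Integrable fun y : ℝ => (1 + y ^ 2) ^ (-s) := by
  have h := integrable_rpow_neg_one_add_norm_sq (E := ℝ) (μ := volume) (r := 2 * s)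
    (by rw [Module.finrank_self, Nat.cast_one]; linarith)
  simpa [Real.norm_eq_abs, sq_abs, show -(2 * s) / 2 = -s by ring] using h

lemma continuous_log_pow_mul_rpow_neg (k : ℕ) (s : ℝ) :
    Continuous fun y : ℝ => Real.log (1 + y ^ 2) ^ k * (1 + y ^ 2) ^ (-s) := by
  have hpos (y : ℝ) : 1 + y ^ 2 ≠ 0 := by positivity
  fun_prop (disch := first | exact hpos _ | exact Or.inl (hpos _))

lemma integrable_log_pow_mul_rpow_neg (k : ℕ) {s : ℝ} (hs : 1 / 2 < s) :
    Integrable fun y : ℝ => Real.log (1 + y ^ 2) ^ k * (1 + y ^ 2) ^ (-s) := by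
  set δ := (s - 1 / 2) / 2 with hδ
  refine ((integrable_one_add_sq_rpow_neg (s := s - δ) (by linarith [hδ])).const_mul
    (((k + 1) / δ) ^ k)).mono' (continuous_log_pow_mul_rpow_neg k s).aestronglyMeasurable
    (.of_forall fun y => ?_)
  rw [Real.norm_of_nonneg (by have := Real.log_nonneg (one_le_one_add_sq y); positivity)]
  exact log_pow_mul_rpow_neg_le (one_le_one_add_sq y) (by positivity) le_rfl k

lemma hasDerivAt_logMoment (k : ℕ) {s : ℝ} (hs : 1 / 2 < s) :
    HasDerivAt (logMoment k) (-logMoment (k + 1) s) s := by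
  -- On the ball `|x - s| < δ`, the extra logarithm costs a factor `w ^ δ`, so the integrands
  -- are dominated by a multiple of `w ^ (-(s - 2δ))`, and `s - 2δ > 1/2`.
  set δ := (s - 1 / 2) / 3 with hδ_def
  have hδ : 0 < δ := by positivity
  have hderiv (y x : ℝ) : HasDerivAt (fun x => Real.log (1 + y ^ 2) ^ k * (1 + y ^ 2) ^ (-x))
      (-(Real.log (1 + y ^ 2) ^ (k + 1) * (1 + y ^ 2) ^ (-x))) x := by
    refine (((hasDerivAt_neg x).const_rpow (by positivity : (0 : ℝ) < 1 + y ^ 2)).const_mul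
      (Real.log (1 + y ^ 2) ^ k)).congr_deriv ?_
    ring
  have hdom := hasDerivAt_integral_of_dominated_loc_of_deriv_le (μ := volume)
    (F' := fun x y => -(Real.log (1 + y ^ 2) ^ (k + 1) * (1 + y ^ 2) ^ (-x)))
    (bound := fun y => ((k + 1 + 1) / δ) ^ (k + 1) * (1 + y ^ 2) ^ (-(s - 2 * δ)))
    (Metric.ball_mem_nhds s hδ)
    (.of_forall fun x => (continuous_log_pow_mul_rpow_neg k x).aestronglyMeasurable)
    (integrable_log_pow_mul_rpow_neg k hs)
    (continuous_log_pow_mul_rpow_neg (k + 1) s).neg.aestronglyMeasurable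
    (.of_forall fun y x hx => ?_)
    ((integrable_one_add_sq_rpow_neg (by linarith [hδ_def])).const_mul _)
    (.of_forall fun y x _ => hderiv y x)
  · have h := hdom.2
    rw [integral_neg] at h
    exact h
  · have hx : s - δ ≤ x := by
      have := (abs_sub_lt_iff.mp (Metric.mem_ball.mp hx)).2
      linarith
    rw [norm_neg, Real.norm_of_nonneg
      (by have := Real.log_nonneg (one_le_one_add_sq y); positivity)]
    convert log_pow_mul_rpow_neg_le (one_le_one_add_sq y) hδ hx (k + 1) using 3
    · push_cast; ring
    · ring

lemma integral_Ioo_rpow_mul_one_sub_rpow {a b : ℝ} (ha : 0 < a) (hb : 0 < b) :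
    ∫ x in Ioo (0 : ℝ) 1, x ^ (a - 1) * (1 - x) ^ (b - 1) =
      Real.Gamma a * Real.Gamma b / Real.Gamma (a + b) := by
  have hbeta := Complex.Gamma_mul_Gamma_eq_betaIntegral (s := a) (t := b) (by simpa) (by simpa)
  have hint : Complex.betaIntegral a b =
      ((∫ x in (0 : ℝ)..1, x ^ (a - 1) * (1 - x) ^ (b - 1) : ℝ) : ℂ) := by
    rw [Complex.betaIntegral, ← intervalIntegral.integral_ofReal]
    refine intervalIntegral.integral_congr fun x hx => ?_
    rw [uIcc_of_le zero_le_one] at hx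
    push_cast [Complex.ofReal_cpow hx.1, Complex.ofReal_cpow (sub_nonneg.2 hx.2)]
    rfl
  rw [hint, ← Complex.ofReal_add, Complex.Gamma_ofReal, Complex.Gamma_ofReal,
    Complex.Gamma_ofReal] at hbeta
  rw [← integral_Ioc_eq_integral_Ioo, ← intervalIntegral.integral_of_le zero_le_one,
    eq_div_iff (Real.Gamma_pos_of_pos (add_pos ha hb)).ne', mul_comm]
  exact_mod_cast hbeta.symm

lemma image_sq_div_one_add_sq_Ioi :
    (fun t : ℝ => t ^ 2 / (1 + t ^ 2)) '' Ioi 0 = Ioo 0 1 := by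
  ext x
  constructor
  · rintro ⟨t, ht : 0 < t, rfl⟩
    have hA : 0 < 1 + t ^ 2 := by positivity
    exact ⟨by positivity, (div_lt_one hA).2 (by linarith)⟩
  · rintro ⟨hx0, hx1⟩
    have hq : 0 < x / (1 - x) := div_pos hx0 (by linarith)
    refine ⟨Real.sqrt (x / (1 - x)), Real.sqrt_pos.2 hq, ?_⟩
    simp only [Real.sq_sqrt hq.le]
    field_simp [(by linarith : (1 : ℝ) - x ≠ 0)]
    ring

lemma integral_Ioi_two_mul_one_add_sq_rpow_neg (s : ℝ) :
    ∫ t in Ioi (0 : ℝ), 2 * (1 + t ^ 2) ^ (-s) =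
      ∫ x in Ioo (0 : ℝ) 1, x ^ (1 / 2 - 1 : ℝ) * (1 - x) ^ (s - 1 / 2 - 1) := by
  set φ : ℝ → ℝ := fun t => t ^ 2 / (1 + t ^ 2) with hφ
  have hone_sub (t : ℝ) : 1 - φ t = (1 + t ^ 2)⁻¹ := by
    have : 1 + t ^ 2 ≠ 0 := by positivity
    rw [hφ]
    field_simp
    ring
  have hmono : MonotoneOn φ (Ioi 0) := fun a ha b _ hab => by
    have hsq : a ^ 2 ≤ b ^ 2 := pow_le_pow_left₀ (le_of_lt ha) hab 2
    have hinv : (1 + b ^ 2)⁻¹ ≤ (1 + a ^ 2)⁻¹ := inv_anti₀ (by positivity) (by linarith)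
    linarith [hone_sub a, hone_sub b]
  have hderiv (t : ℝ) (_ : t ∈ Ioi (0 : ℝ)) :
      HasDerivWithinAt φ (2 * t / (1 + t ^ 2) ^ 2) (Ioi 0) t := by
    have h := (hasDerivAt_pow 2 t).div ((hasDerivAt_pow 2 t).const_add 1)
      (by positivity : (1 : ℝ) + t ^ 2 ≠ 0)
    refine (h.congr_deriv ?_).hasDerivWithinAt
    field_simp
    ring
  rw [← image_sq_div_one_add_sq_Ioi,
    integral_image_eq_integral_deriv_smul_of_monotoneOn measurableSet_Ioi hderiv hmono]
  refine setIntegral_congr_fun measurableSet_Ioi fun t (ht : 0 < t) => ?_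
  have hA : 0 < 1 + t ^ 2 := by positivity
  have hφt : φ t ^ (1 / 2 - 1 : ℝ) = t⁻¹ * (1 + t ^ 2) ^ (1 / 2 : ℝ) := by
    rw [hφ, show (1 / 2 - 1 : ℝ) = -(1 / 2) by norm_num, Real.div_rpow (sq_nonneg t) hA.le,
      Real.rpow_neg (sq_nonneg t), Real.rpow_neg hA.le, ← Real.sqrt_eq_rpow (t ^ 2),
      Real.sqrt_sq ht.le, div_inv_eq_mul]
  rw [smul_eq_mul, hone_sub, hφt, Real.inv_rpow hA.le, ← Real.rpow_neg hA.le]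
  rw [mul_assoc t⁻¹, ← Real.rpow_add hA, show (1 / 2 : ℝ) + -(s - 1 / 2 - 1) = 2 + -s by ring,
    Real.rpow_add hA, Real.rpow_two]
  field_simp

lemma logMoment_zero {s : ℝ} (hs : 1 / 2 < s) :
    logMoment 0 s = √π * Real.Gamma (s - 1 / 2) / Real.Gamma s := by
  have heven := integral_comp_abs (f := fun y => (1 + y ^ 2) ^ (-s))
  simp only [sq_abs] at heven
  simp only [logMoment, pow_zero, one_mul]
  rw [heven, ← integral_const_mul, integral_Ioi_two_mul_one_add_sq_rpow_neg,
    integral_Ioo_rpow_mul_one_sub_rpow (by norm_num) (by linarith), Real.Gamma_one_half_eq,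
    show 1 / 2 + (s - 1 / 2) = s by ring]

lemma logMoment_zero_pos {s : ℝ} (hs : 1 / 2 < s) : 0 < logMoment 0 s := by
  rw [logMoment_zero hs]
  have := Real.Gamma_pos_of_pos (by linarith : 0 < s - 1 / 2)
  have := Real.Gamma_pos_of_pos (by linarith : 0 < s)
  positivity

lemma hasDerivAt_log_Gamma {x : ℝ} (hx : 0 < x) :
    HasDerivAt (fun y => Real.log (Real.Gamma y)) (digamma x) x :=
  ((Real.differentiableAt_Gamma fun m => by linarith [(m.cast_nonneg : (0 : ℝ) ≤ m)]).log
    (Real.Gamma_pos_of_pos hx).ne').hasDerivAt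

lemma digamma_sub_digamma_eq_logMoment_div {s : ℝ} (hs : 1 / 2 < s) :
    digamma s - digamma (s - 1 / 2) = logMoment 1 s / logMoment 0 s := by
  have hlog : HasDerivAt (fun u => Real.log (logMoment 0 u)) (-logMoment 1 s / logMoment 0 s) s :=
    (hasDerivAt_logMoment 0 hs).log (logMoment_zero_pos hs).ne'
  have hgamma : HasDerivAt (fun u => Real.log √π + Real.log (Real.Gamma (u - 1 / 2)) -
      Real.log (Real.Gamma u)) (digamma (s - 1 / 2) - digamma s) s := by
    have h := (hasDerivAt_log_Gamma (by linarith : 0 < s - 1 / 2)).comp s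
      ((hasDerivAt_id s).sub_const (1 / 2))
    exact ((h.const_add (Real.log √π)).sub (hasDerivAt_log_Gamma (by linarith))).congr_deriv
      (by rw [mul_one])
  have heq : (fun u => Real.log (logMoment 0 u)) =ᶠ[𝓝 s] fun u => Real.log √π +
      Real.log (Real.Gamma (u - 1 / 2)) - Real.log (Real.Gamma u) := by
    filter_upwards [Ioi_mem_nhds hs] with u (hu : 1 / 2 < u)
    rw [logMoment_zero hu, Real.log_div, Real.log_mul]
    all_goals
      have := Real.Gamma_pos_of_pos (by linarith : 0 < u - 1 / 2)
      have := Real.Gamma_pos_of_pos (by linarith : 0 < u)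
      positivity
  have := (hlog.congr_of_eventuallyEq heq.symm).unique hgamma
  rw [neg_div] at this
  linarith

lemma Dfun_eq_logMoment_div {ν : ℝ} (hν : 0 < ν) :
    Dfun ν = logMoment 1 ((ν + 1) / 2) / logMoment 0 ((ν + 1) / 2) := by
  rw [← digamma_sub_digamma_eq_logMoment_div (by linarith), Dfun,
    show (ν + 1) / 2 - 1 / 2 = ν / 2 by ring]

lemma hasDerivAt_Dfun {ν : ℝ} (hν : 0 < ν) :
    HasDerivAt Dfun ((logMoment 1 ((ν + 1) / 2) ^ 2 -
      logMoment 0 ((ν + 1) / 2) * logMoment 2 ((ν + 1) / 2)) /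
        (2 * logMoment 0 ((ν + 1) / 2) ^ 2)) ν := by
  have hs : 1 / 2 < (ν + 1) / 2 := by linarith
  have hlin : HasDerivAt (fun μ : ℝ => (μ + 1) / 2) (1 / 2) ν :=
    ((hasDerivAt_id ν).add_const 1).div_const 2
  have h1 : HasDerivAt (fun μ => logMoment 1 ((μ + 1) / 2))
      (-logMoment 2 ((ν + 1) / 2) * (1 / 2)) ν := ((hasDerivAt_logMoment 1 hs).comp ν hlin :)
  have h0 : HasDerivAt (fun μ => logMoment 0 ((μ + 1) / 2))
      (-logMoment 1 ((ν + 1) / 2) * (1 / 2)) ν := ((hasDerivAt_logMoment 0 hs).comp ν hlin :)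
  have hratio := h1.div h0 (logMoment_zero_pos hs).ne'
  have heq : Dfun =ᶠ[𝓝 ν] fun μ => logMoment 1 ((μ + 1) / 2) / logMoment 0 ((μ + 1) / 2) := by
    filter_upwards [Ioi_mem_nhds hν] with μ hμ using Dfun_eq_logMoment_div hμ
  refine (hratio.congr_of_eventuallyEq heq).congr_deriv ?_
  have := (logMoment_zero_pos hs).ne'
  field_simp
  ring

lemma Dfun_sq_sub_two_mul_deriv {ν : ℝ} (hν : 0 < ν) :
    Dfun ν ^ 2 - 2 * deriv Dfun ν = logMoment 2 ((ν + 1) / 2) / logMoment 0 ((ν + 1) / 2) := by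
  have := (logMoment_zero_pos (by linarith : 1 / 2 < (ν + 1) / 2)).ne'
  rw [(hasDerivAt_Dfun hν).deriv, Dfun_eq_logMoment_div hν]
  field_simp
  ring

lemma one_add_sq_div_eq {ν : ℝ} (hν : 0 ≤ ν) (t : ℝ) : 1 + t ^ 2 / ν = 1 + (t / √ν) ^ 2 := by
  rw [div_pow, Real.sq_sqrt hν]

lemma integral_comp_one_add_sq_div {ν : ℝ} (hν : 0 < ν) (g : ℝ → ℝ) :
    ∫ t, g (1 + t ^ 2 / ν) = √ν * ∫ y, g (1 + y ^ 2) := by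
  simp_rw [one_add_sq_div_eq hν.le]
  rw [Measure.integral_comp_div (fun y => g (1 + y ^ 2)), abs_of_pos (Real.sqrt_pos.2 hν),
    smul_eq_mul]

lemma MeasureTheory.Integrable.comp_one_add_sq_div {ν : ℝ} (hν : 0 < ν) {g : ℝ → ℝ}
    (hg : Integrable fun y => g (1 + y ^ 2)) : Integrable fun t => g (1 + t ^ 2 / ν) := by
  simp_rw [one_add_sq_div_eq hν.le]
  exact hg.comp_div (Real.sqrt_pos.2 hν).ne'

lemma Kfun_mul_sqrt_mul_logMoment_zero {ν : ℝ} (hν : 0 < ν) :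
    Kfun ν * √ν * logMoment 0 ((ν + 1) / 2) = 1 := by
  have := (Real.Gamma_pos_of_pos (by linarith : 0 < (ν + 1) / 2)).ne'
  have := (Real.Gamma_pos_of_pos (by linarith : 0 < ν / 2)).ne'
  have := (Real.sqrt_pos.2 hν).ne'
  have := (Real.sqrt_pos.2 Real.pi_pos).ne'
  rw [logMoment_zero (by linarith), Kfun, show (ν + 1) / 2 - 1 / 2 = ν / 2 by ring,
    Real.sqrt_mul Real.pi_pos.le]
  field_simp

lemma log_pow_mul_tDensity (ν t : ℝ) (k : ℕ) :
    Real.log (1 + t ^ 2 / ν) ^ k * tDensity ν t =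
      Kfun ν * (Real.log (1 + t ^ 2 / ν) ^ k * (1 + t ^ 2 / ν) ^ (-((ν + 1) / 2))) := by
  rw [tDensity]
  ring

lemma integrable_log_pow_mul_tDensity {ν : ℝ} (hν : 0 < ν) (k : ℕ) :
    Integrable fun t => Real.log (1 + t ^ 2 / ν) ^ k * tDensity ν t := by
  simp_rw [log_pow_mul_tDensity]
  exact ((integrable_log_pow_mul_rpow_neg k (s := (ν + 1) / 2) (by linarith)).comp_one_add_sq_div
    hν (g := fun w => Real.log w ^ k * w ^ (-((ν + 1) / 2)))).const_mul _

lemma integral_log_pow_mul_tDensity {ν : ℝ} (hν : 0 < ν) (k : ℕ) :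
    ∫ t, Real.log (1 + t ^ 2 / ν) ^ k * tDensity ν t =
      logMoment k ((ν + 1) / 2) / logMoment 0 ((ν + 1) / 2) := by
  have hnorm := Kfun_mul_sqrt_mul_logMoment_zero hν
  simp_rw [log_pow_mul_tDensity]
  rw [integral_const_mul, integral_comp_one_add_sq_div hν
    (fun w => Real.log w ^ k * w ^ (-((ν + 1) / 2)))]
  change Kfun ν * (√ν * logMoment k ((ν + 1) / 2)) = _
  rw [eq_div_iff (logMoment_zero_pos (by linarith)).ne']
  linear_combination (logMoment k ((ν + 1) / 2)) * hnorm

lemma integral_tDensity {ν : ℝ} (hν : 0 < ν) : ∫ t, tDensity ν t = 1 := by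
  simpa [div_self (logMoment_zero_pos (by linarith : 1 / 2 < (ν + 1) / 2)).ne'] using
    integral_log_pow_mul_tDensity hν 0

lemma integral_log_mul_tDensity {ν : ℝ} (hν : 0 < ν) :
    ∫ t, Real.log (1 + t ^ 2 / ν) * tDensity ν t = Dfun ν := by
  simpa [← Dfun_eq_logMoment_div hν] using integral_log_pow_mul_tDensity hν 1

lemma integral_log_sq_mul_tDensity {ν : ℝ} (hν : 0 < ν) :
    ∫ t, Real.log (1 + t ^ 2 / ν) ^ 2 * tDensity ν t = Dfun ν ^ 2 - 2 * deriv Dfun ν := by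
  rw [integral_log_pow_mul_tDensity hν 2, Dfun_sq_sub_two_mul_deriv hν]

lemma integral_sub_sq_mul {α : Type*} [MeasurableSpace α] {μ : Measure α} {X f : α → ℝ} (c : ℝ)
    (hf : Integrable f μ) (hXf : Integrable (fun a => X a * f a) μ)
    (hX2f : Integrable (fun a => X a ^ 2 * f a) μ) :
    ∫ a, (X a - c) ^ 2 * f a ∂μ =
      ∫ a, X a ^ 2 * f a ∂μ - 2 * c * ∫ a, X a * f a ∂μ + c ^ 2 * ∫ a, f a ∂μ := by
  have hexpand : (fun a => (X a - c) ^ 2 * f a) =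
      fun a => (X a ^ 2 * f a - 2 * c * (X a * f a)) + c ^ 2 * f a := by
    ext a
    ring
  have hlin : Integrable (fun a => X a ^ 2 * f a - 2 * c * (X a * f a)) μ :=
    hX2f.sub (hXf.const_mul _)
  rw [hexpand, integral_add hlin (hf.const_mul _), integral_sub hX2f (hXf.const_mul _),
    integral_const_mul, integral_const_mul]

theorem second_moment_and_variance_n_log_one_add_tsq (n : ℕ) (hn : 2 ≤ n)
    (ν₁ : ℝ) (hν₁ : ν₁ = (n : ℝ) - 1)
    (m₁ m₂ : ℝ) (hm₁ : m₁ = (n : ℝ) * Dfun ν₁)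
    (hm₂ : m₂ = (n : ℝ) ^ 2 * ((Dfun ν₁) ^ 2 - 2 * deriv Dfun ν₁)) :
    (∫ t : ℝ, ((n : ℝ) * Real.log (1 + t ^ 2 / ν₁)) ^ 2 * tDensity ν₁ t) = m₂ ∧
    (∫ t : ℝ, ((n : ℝ) * Real.log (1 + t ^ 2 / ν₁) - m₁) ^ 2 * tDensity ν₁ t) = m₂ - m₁ ^ 2 := by
  have hν : 0 < ν₁ := by
    have : (2 : ℝ) ≤ n := by exact_mod_cast hn
    linarith
  have hmean : ∫ t, (n : ℝ) * Real.log (1 + t ^ 2 / ν₁) * tDensity ν₁ t = m₁ := by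
    simp_rw [mul_assoc]
    rw [integral_const_mul, integral_log_mul_tDensity hν, hm₁]
  have hsecond : ∫ t, ((n : ℝ) * Real.log (1 + t ^ 2 / ν₁)) ^ 2 * tDensity ν₁ t = m₂ := by
    simp_rw [mul_pow, mul_assoc]
    rw [integral_const_mul, integral_log_sq_mul_tDensity hν, hm₂]
  refine ⟨hsecond, ?_⟩
  have hI (k : ℕ) := integrable_log_pow_mul_tDensity hν k
  rw [integral_sub_sq_mul m₁ (by simpa using hI 0)
    (by simpa only [pow_one, mul_assoc] using (hI 1).const_mul (n : ℝ))
    (by simpa only [mul_pow, mul_assoc] using (hI 2).const_mul ((n : ℝ) ^ 2)),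
    hsecond, hmean, integral_tDensity hν]
  ring
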